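/- Let W ⊆ {0,1}^n and suppose x = Σ_{w∈W} x_w e_w ∈ Cl(n) is a nonzero element with x S = √n·x, where S = e_1 + ⋯ + e_n and e_w denotes the standard basis element of Cl(n) corresponding to w. Then for every vertex v, one has √n·|x_v| ≤ Σ_{w ∈ N(v)} |x_w|, where N(v) is the set of vertices in W adjacent to v in Q^n. -/

import Mathlib

open scoped BigOperators

/-- `Cl n`: the real Clifford algebra of the standard positive definite quadratic form on `ℝⁿ`. -/
noncomputable abbrev Cl (n : ℕ) : Type :=
  CliffordAlgebra (QuadraticMap.weightedSumSquares ℝ (fun _ : Fin n => (1 : ℝ)))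

/-- The orthonormal generators `e i` of `Cl n`, satisfying `e i ^ 2 = 1`, `e i * e j = - e j * e i`. -/
noncomputable def e (n : ℕ) (i : Fin n) : Cl n :=
  CliffordAlgebra.ι _ (Pi.single i 1)

/-- `S = e 1 + ⋯ + e n`. -/
noncomputable def S (n : ℕ) : Cl n := ∑ i, e n i


/-- The basis element of `Cl n` corresponding to a vertex `v ∈ {0,1}ⁿ`:
the product of the `e i` with `v i = true`, in increasing order of `i`. -/
noncomputable def eVert (n : ℕ) (v : Fin n → Bool) : Cl n :=
  (((List.finRange n).filter (fun i => v i)).map (e n)).prod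

namespace ECB

variable {n : ℕ}

/-- Flip coordinate `i`. -/
def flipv (v : Fin n → Bool) (i : Fin n) : Fin n → Bool := Function.update v i (!v i)

lemma flipv_apply_ne (v : Fin n → Bool) {i j : Fin n} (h : j ≠ i) : flipv v i j = v j :=
  Function.update_of_ne h _ _

lemma flipv_def (v : Fin n → Bool) (i : Fin n) :
    flipv v i = Function.update v i (!v i) := rfl

lemma flipv_flipv (v : Fin n → Bool) (i : Fin n) : flipv (flipv v i) i = v := by
  funext j
  by_cases h : j = i
  · subst h
    simp [flipv]
  · rw [flipv_apply_ne _ h, flipv_apply_ne _ h]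

lemma flipv_comm (v : Fin n → Bool) {i j : Fin n} (h : i ≠ j) :
    flipv (flipv v i) j = flipv (flipv v j) i := by
  unfold flipv
  rw [Function.update_of_ne h.symm, Function.update_of_ne h, Function.update_comm h]

/-- The sign `(-1)^{#{j > i : w j}}`, written as a product. -/
def sg (i : Fin n) (w : Fin n → Bool) : ℝ :=
  ∏ j, if i < j ∧ w j = true then (-1 : ℝ) else 1

lemma abs_sg (i : Fin n) (w : Fin n → Bool) : |sg i w| = 1 := by
  rw [sg, Finset.abs_prod]
  apply Finset.prod_eq_one
  intro j _
  split <;> simp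

lemma sg_mul_self (i : Fin n) (w : Fin n → Bool) : sg i w * sg i w = 1 := by
  have h := abs_sg i w
  nlinarith [abs_nonneg (sg i w), sq_abs (sg i w)]

lemma sg_flipv_of_not_lt {i j : Fin n} (h : ¬ i < j) (u : Fin n → Bool) :
    sg i (flipv u j) = sg i u := by
  unfold sg
  apply Finset.prod_congr rfl
  intro k _
  by_cases hk : k = j
  · subst hk
    simp [h]
  · rw [flipv_apply_ne _ hk]

lemma sg_flipv_of_lt {i j : Fin n} (h : i < j) (u : Fin n → Bool) :
    sg i (flipv u j) = - sg i u := by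
  unfold sg
  rw [Finset.prod_eq_mul_prod_sdiff_singleton_of_mem (Finset.mem_univ j),
    Finset.prod_eq_mul_prod_sdiff_singleton_of_mem (Finset.mem_univ j)
      (fun k => if i < k ∧ u k = true then (-1 : ℝ) else 1)]
  have hrest : ∏ k ∈ Finset.univ \ {j}, (if i < k ∧ flipv u j k = true then (-1 : ℝ) else 1) =
      ∏ k ∈ Finset.univ \ {j}, (if i < k ∧ u k = true then (-1 : ℝ) else 1) := by
    apply Finset.prod_congr rfl
    intro k hk
    have hkj : k ≠ j := by
      simp only [Finset.mem_sdiff, Finset.mem_singleton] at hk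
      exact hk.2
    rw [flipv_apply_ne _ hkj]
  rw [hrest]
  have : flipv u j j = !u j := by simp [flipv]
  rw [this]
  cases hu : u j <;> simp [h, hu] <;> ring

/-- The operator `M i` on `(Fin n → Bool) → ℝ`, corresponding to right multiplication
by `e i` on the standard basis of `Cl n`. -/
def M (i : Fin n) : Module.End ℝ ((Fin n → Bool) → ℝ) where
  toFun f := fun u => sg i u * f (flipv u i)
  map_add' f g := by funext u; simp [mul_add]
  map_smul' r f := by
    funext u
    simp only [Pi.smul_apply, smul_eq_mul, RingHom.id_apply]
    ring

lemma M_apply (i : Fin n) (f : (Fin n → Bool) → ℝ) (u : Fin n → Bool) :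
    M i f u = sg i u * f (flipv u i) := rfl

lemma M_mul_self (i : Fin n) : M i * M i = 1 := by
  apply LinearMap.ext
  intro f
  funext u
  rw [Module.End.mul_apply, M_apply, M_apply, flipv_flipv,
    sg_flipv_of_not_lt (lt_irrefl i), ← mul_assoc, sg_mul_self, one_mul]
  rfl

lemma M_anticomm {i j : Fin n} (h : i ≠ j) : M i * M j + M j * M i = 0 := by
  apply LinearMap.ext
  intro f
  funext u
  simp only [LinearMap.add_apply, Pi.add_apply, Module.End.mul_apply, M_apply,
    LinearMap.zero_apply, Pi.zero_apply]
  rw [flipv_comm u h.symm]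
  rcases h.lt_or_gt with hlt | hlt
  · rw [sg_flipv_of_not_lt (not_lt.mpr hlt.le) u, sg_flipv_of_lt hlt u]
    ring
  · rw [sg_flipv_of_lt hlt u, sg_flipv_of_not_lt (not_lt.mpr hlt.le) u]
    ring

/-- The linear map `ℝⁿ → End(V)` sending `m` to `Σ m i • M i`. -/
noncomputable def phi : (Fin n → ℝ) →ₗ[ℝ] Module.End ℝ ((Fin n → Bool) → ℝ) :=
  ∑ i, LinearMap.smulRight (LinearMap.proj i) (M i)

lemma phi_apply (m : Fin n → ℝ) : phi m = ∑ i, m i • M i := by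
  simp [phi, LinearMap.sum_apply]

lemma univ_diag_eq_image :
    (Finset.univ : Finset (Fin n)).diag =
      Finset.univ.image (fun i : Fin n => (i, i)) := by
  ext p
  simp only [Finset.mem_diag, Finset.mem_image, Finset.mem_univ, true_and]
  constructor
  · intro hp
    exact ⟨p.1, by rw [Prod.ext_iff]; exact ⟨rfl, hp⟩⟩
  · rintro ⟨a, rfl⟩
    rfl

lemma phi_sq (m : Fin n → ℝ) :
    phi m * phi m =
      algebraMap ℝ (Module.End ℝ ((Fin n → Bool) → ℝ))
        (QuadraticMap.weightedSumSquares ℝ (fun _ : Fin n => (1 : ℝ)) m) := by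
  rw [phi_apply, Finset.sum_mul_sum]
  have hterm : ∀ i j : Fin n, (m i • M i) * (m j • M j) = (m i * m j) • (M i * M j) := by
    intro i j
    rw [smul_mul_smul_comm]
  simp only [hterm]
  rw [← Finset.sum_product']
  rw [← Finset.diag_union_offDiag (Finset.univ : Finset (Fin n)),
    Finset.sum_union (Finset.disjoint_diag_offDiag _)]
  have hoff : ∑ p ∈ (Finset.univ : Finset (Fin n)).offDiag,
      (m p.1 * m p.2) • (M p.1 * M p.2) = 0 := by
    refine Finset.sum_involution (fun p _ => p.swap) ?_ ?_ ?_ ?_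
    · intro p hp
      have hne : p.1 ≠ p.2 := (Finset.mem_offDiag.mp hp).2.2
      have : (m p.1 * m p.2) • (M p.1 * M p.2) + (m p.2 * m p.1) • (M p.2 * M p.1)
          = (m p.1 * m p.2) • (M p.1 * M p.2 + M p.2 * M p.1) := by
        rw [smul_add, mul_comm (m p.2) (m p.1)]
      simpa [Prod.swap, M_anticomm hne] using this
    · intro p hp _
      have hne : p.1 ≠ p.2 := (Finset.mem_offDiag.mp hp).2.2
      intro hcon
      exact hne ((Prod.ext_iff.mp hcon).1).symm
    · intro p hp
      have h := Finset.mem_offDiag.mp hp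
      exact Finset.mem_offDiag.mpr ⟨h.2.1, h.1, h.2.2.symm⟩
    · intro p _
      exact Prod.swap_swap p
  rw [hoff, add_zero]
  rw [univ_diag_eq_image, Finset.sum_image (by intro a _ b _ h; simpa [Prod.ext_iff] using h)]
  simp only [M_mul_self]
  rw [Algebra.algebraMap_eq_smul_one, QuadraticMap.weightedSumSquares_apply,
    Finset.sum_smul]
  simp [smul_smul]

/-- The representation of `Cl n` into the opposite of `End(V)`;
this makes `ψ` below an anti-homomorphism, i.e. a right action. -/
noncomputable def rho : Cl n →ₐ[ℝ] (Module.End ℝ ((Fin n → Bool) → ℝ))ᵐᵒᵖ :=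
  CliffordAlgebra.lift _
    ⟨(MulOpposite.opLinearEquiv ℝ).toLinearMap ∘ₗ phi, by
      intro m
      simp only [LinearMap.comp_apply, LinearEquiv.coe_coe, MulOpposite.coe_opLinearEquiv]
      rw [← MulOpposite.op_mul, phi_sq, MulOpposite.algebraMap_apply]⟩

noncomputable def psi : Cl n →ₗ[ℝ] Module.End ℝ ((Fin n → Bool) → ℝ) :=
  (MulOpposite.opLinearEquiv ℝ).symm.toLinearMap ∘ₗ (rho (n := n)).toLinearMap

lemma psi_mul (x y : Cl n) : psi (x * y) = psi y * psi x := by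
  simp [psi, map_mul]

lemma psi_one : psi (1 : Cl n) = 1 := by
  simp [psi]

lemma psi_e (i : Fin n) : psi (e n i) = M i := by
  have h : rho (e n i) = MulOpposite.op (phi (Pi.single i 1)) := by
    rw [e, rho, CliffordAlgebra.lift_ι_apply]
    rfl
  simp only [psi, LinearMap.comp_apply, AlgHom.toLinearMap_apply, h,
    LinearEquiv.coe_coe, MulOpposite.coe_opLinearEquiv_symm, MulOpposite.unop_op]
  rw [phi_apply]
  rw [Finset.sum_eq_single i]
  · simp
  · intro j _ hj
    rw [Pi.single_eq_of_ne hj, zero_smul]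
  · intro h
    exact absurd (Finset.mem_univ i) h

/-- Indicator function of the vertex `w`. -/
def dl (w : Fin n → Bool) : (Fin n → Bool) → ℝ := fun u => if u = w then 1 else 0

lemma M_dl {a : Fin n} {w : Fin n → Bool} (hw : w a = false)
    (htop : ∀ j, w j = true → ¬ a < j) :
    M a (dl w) = dl (Function.update w a true) := by
  funext u
  rw [M_apply]
  by_cases hu : u = Function.update w a true
  · subst hu
    have h1 : flipv (Function.update w a true) a = w := by
      funext j
      by_cases hj : j = a
      · subst hj
        simp [flipv, hw]
      · rw [flipv_apply_ne _ hj, Function.update_of_ne hj]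
    have h2 : sg a (Function.update w a true) = 1 := by
      apply Finset.prod_eq_one
      intro j _
      have : ¬ (a < j ∧ Function.update w a true j = true) := by
        rintro ⟨hlt, hj⟩
        have hja : j ≠ a := fun hc => absurd hc.symm.le (not_le.mpr (hc ▸ hlt)).elim
        rw [Function.update_of_ne hja] at hj
        exact htop j hj hlt
      simp [this]
    rw [h1, h2, dl, dl]
    simp
  · have h3 : flipv u a ≠ w := by
      intro hc
      apply hu
      have := congrArg (fun z => flipv z a) hc
      simp only [flipv_flipv] at this
      rw [this]
      funext j
      by_cases hj : j = a
      · subst hj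
        simp [flipv, hw]
      · rw [flipv_apply_ne _ hj, Function.update_of_ne hj]
    rw [dl, dl]
    simp [h3, hu]

lemma psi_prod : ∀ (l : List (Fin n)), l.Pairwise (· < ·) →
    ∀ w : Fin n → Bool, (∀ a ∈ l, ∀ j, w j = true → j < a) →
    psi ((l.map (e n)).prod) (dl w) = dl (fun j => w j || decide (j ∈ l)) := by
  intro l
  induction l with
  | nil =>
    intro _ w _
    rw [List.map_nil, List.prod_nil, psi_one]
    have harg : (fun j : Fin n => w j || decide (j ∈ ([] : List (Fin n)))) = w := by
      funext j
      simp
    rw [harg]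
    rfl
  | cons a t ih =>
    intro hpw w hyp
    have hpw' := List.pairwise_cons.mp hpw
    rw [List.map_cons, List.prod_cons, psi_mul, Module.End.mul_apply, psi_e]
    have hwa : w a = false := by
      cases hwa : w a
      · rfl
      · exact absurd (hyp a ((List.mem_cons_self (a := a) (l := t))) a hwa) (lt_irrefl a)
    have htop : ∀ j, w j = true → ¬ a < j := by
      intro j hj
      exact not_lt.mpr (hyp a ((List.mem_cons_self (a := a) (l := t))) j hj).le
    rw [M_dl hwa htop]
    rw [ih hpw'.2 (Function.update w a true) ?hyp']
    case hyp' =>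
      intro b hb j hj
      by_cases hja : j = a
      · subst hja
        exact hpw'.1 b hb
      · rw [Function.update_of_ne hja] at hj
        exact hyp b (List.mem_cons_of_mem a hb) j hj
    have harg : (fun j : Fin n => Function.update w a true j || decide (j ∈ t))
        = (fun j : Fin n => w j || decide (j ∈ a :: t)) := by
      funext j
      by_cases hja : j = a
      · subst hja
        simp [List.mem_cons]
      · rw [Function.update_of_ne hja]
        simp [List.mem_cons, hja]
    rw [harg]

lemma coeff_eVert (v : Fin n → Bool) :
    psi (eVert n v) (dl (fun _ => false)) = dl v := by
  rw [eVert, psi_prod _ ((List.pairwise_lt_finRange n).filter _) _ (by simp)]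
  have harg : (fun j : Fin n =>
      (fun _ : Fin n => false) j || decide (j ∈ (List.finRange n).filter (fun i => v i))) = v := by
    funext j
    simp [List.mem_filter, List.mem_finRange]
  rw [harg]

end ECB

/-- If `x = Σ_{w ∈ W} x_w e_w` is nonzero and satisfies `xS = √n·x`, then for every vertex `v`,
`√n·|x_v| ≤ Σ_{w ∈ N(v)} |x_w|` where `N(v)` is the set of neighbours of `v` lying in `W`. -/
theorem eigenvector_coefficient_bound (n : ℕ) (W : Finset (Fin n → Bool))
    (c : (Fin n → Bool) → ℝ) (hsupp : ∀ v ∉ W, c v = 0)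
    (hx0 : (∑ v, c v • eVert n v) ≠ 0)
    (heig : (∑ v, c v • eVert n v) * S n = Real.sqrt n • ∑ v, c v • eVert n v) :
    ∀ v : Fin n → Bool, Real.sqrt n * |c v| ≤
      ∑ i ∈ Finset.univ.filter (fun i : Fin n => Function.update v i (!v i) ∈ W),
        |c (Function.update v i (!v i))| := by
  classical
  intro v
  have hG : ∀ w, ECB.psi (∑ u, c u • eVert n u) (ECB.dl (fun _ => false)) w = c w := by
    intro w
    rw [map_sum, LinearMap.sum_apply, Finset.sum_apply]
    rw [Finset.sum_eq_single w]
    · rw [map_smul]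
      simp [ECB.coeff_eVert, ECB.dl]
    · intro u _ hu
      rw [map_smul]
      have h0 : ECB.dl (n := n) u w = 0 := by simp [ECB.dl, Ne.symm hu]
      simp [ECB.coeff_eVert, h0]
    · intro h
      exact absurd (Finset.mem_univ w) h
  have hpsiS : ECB.psi (S n) = ∑ i, ECB.M i := by
    rw [S, map_sum]
    exact Finset.sum_congr rfl fun i _ => ECB.psi_e i
  have key : ∑ i, ECB.sg i v * c (ECB.flipv v i) = Real.sqrt n * c v := by
    have h1 := congrArg (fun z => ECB.psi z (ECB.dl (n := n) (fun _ => false)) v) heig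
    simp only [ECB.psi_mul, Module.End.mul_apply, map_smul, LinearMap.smul_apply,
      Pi.smul_apply, smul_eq_mul] at h1
    rw [hpsiS, LinearMap.sum_apply, Finset.sum_apply] at h1
    calc ∑ i, ECB.sg i v * c (ECB.flipv v i)
        = ∑ i, ECB.M i (ECB.psi (∑ u, c u • eVert n u) (ECB.dl (fun _ => false))) v := by
          refine Finset.sum_congr rfl fun i _ => ?_
          rw [ECB.M_apply, hG]
      _ = Real.sqrt n * c v := by
          rw [h1, hG]
  have habs : Real.sqrt n * |c v| ≤ ∑ i, |c (ECB.flipv v i)| := by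
    calc Real.sqrt n * |c v| = |Real.sqrt n * c v| := by
          rw [abs_mul, abs_of_nonneg (Real.sqrt_nonneg _)]
      _ = |∑ i, ECB.sg i v * c (ECB.flipv v i)| := by rw [key]
      _ ≤ ∑ i, |ECB.sg i v * c (ECB.flipv v i)| := Finset.abs_sum_le_sum_abs _ _
      _ = ∑ i, |c (ECB.flipv v i)| := by
          refine Finset.sum_congr rfl fun i _ => ?_
          rw [abs_mul, ECB.abs_sg, one_mul]
  have hsplit : ∑ i, |c (ECB.flipv v i)| =
      ∑ i ∈ Finset.univ.filter (fun i : Fin n => Function.update v i (!v i) ∈ W),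
        |c (Function.update v i (!v i))| := by
    simp only [ECB.flipv_def]
    refine (Finset.sum_subset (Finset.filter_subset _ _) ?_).symm
    intro i _ hi
    simp only [Finset.mem_filter, Finset.mem_univ, true_and] at hi
    rw [hsupp _ hi, abs_zero]
  rw [hsplit] at habs
  exact habs
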